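/- arXiv:1603.01152 — 3 statements merged into one kernel-verified Lean document; each statement's English description precedes it below -/
import Mathlib

section
/- Let m, n be positive integers, let 𝔪 be a regular (maximal-rank) nilpotent endomorphism of V = ℂ^m and 𝔫 a regular nilpotent endomorphism of W = ℂ^n. Then the endomorphism 𝔩 = 𝔪 ⊗ 1_W + 1_V ⊗ 𝔫 of V ⊗ W has rank mn − min(m, n). -/
/-!
Since `ker 𝔪` is a line, the kernels of the powers of `𝔪` grow by exactly one dimension per step
until they fill `V`; hence `𝔪^(m-1) v ≠ 0` for some `v`, and `v, 𝔪 v, …, 𝔪^(m-1) v` is a basis.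
In the coordinates `x = ∑ 𝔪^i v ⊗ wᵢ` of `V ⊗ W`, the equation `𝔩 x = 0` reads
`(𝔪 ⊗ 1) x = (1 ⊗ (-𝔫)) x`, so every `wᵢ` equals `(-𝔫)^(m-1-i) w_{m-1}` and `w_{m-1} ∈ ker 𝔫^m`;
conversely, for `w ∈ ker 𝔫^m` the sum `∑ 𝔪^i v ⊗ (-𝔫)^(m-1-i) w` telescopes under `𝔩` to zero.
Thus `ker 𝔩 ≅ ker 𝔫^m`, which has dimension `min m n` by the same growth argument for `𝔫`.
-/

open Module LinearMap TensorProduct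

section KerPow

variable {K V : Type*} [Field K] [AddCommGroup V] [Module K V]

theorem finrank_ker_comp_le {U W : Type*} [AddCommGroup U] [Module K U] [AddCommGroup W]
    [Module K W] [FiniteDimensional K U] [FiniteDimensional K V]
    (f : V →ₗ[K] W) (g : U →ₗ[K] V) :
    finrank K (ker (f ∘ₗ g)) ≤ finrank K (ker f) + finrank K (ker g) := by
  have h := LinearMap.lift_rank_comap_le (f := g) (ker f)
  rw [← ker_comp, ← finrank_eq_rank, ← finrank_eq_rank, ← finrank_eq_rank] at h
  simpa only [Cardinal.lift_natCast, ← Nat.cast_add, Nat.cast_le] using h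

variable [FiniteDimensional K V]

theorem finrank_ker_eq_one_of_finrank_range {f : End K V} (hV : 0 < finrank K V)
    (hf : finrank K (range f) = finrank K V - 1) : finrank K (ker f) = 1 := by
  have := finrank_range_add_finrank_ker f
  omega

theorem finrank_ker_pow_le_mul (f : End K V) (k : ℕ) :
    finrank K (ker (f ^ k)) ≤ k * finrank K (ker f) := by
  induction k with
  | zero => simp [End.one_eq_id]
  | succ k ih =>
    calc finrank K (ker (f ^ (k + 1))) ≤ finrank K (ker (f ^ k)) + finrank K (ker f) :=
          pow_succ f k ▸ finrank_ker_comp_le _ _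
      _ ≤ (k + 1) * finrank K (ker f) := by rw [add_mul, one_mul]; gcongr

theorem pow_finrank_eq_zero_of_isNilpotent {f : End K V} (hf : IsNilpotent f) :
    f ^ finrank K V = 0 := by
  simpa [hf.charpoly_eq_X_pow_finrank] using f.aeval_self_charpoly

theorem finrank_ker_pow_of_finrank_ker_eq_one {f : End K V} (hf : IsNilpotent f)
    (hker : finrank K (ker f) = 1) (k : ℕ) :
    finrank K (ker (f ^ k)) = min k (finrank K V) := by
  rcases le_total k (finrank K V) with hk | hk
  · have hle := finrank_ker_pow_le_mul f k
    -- The kernel dimensions can grow by at most one per step and must reach `finrank K V`.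
    have hge : finrank K V ≤ finrank K (ker (f ^ k)) + (finrank K V - k) := by
      calc finrank K V = finrank K (ker (f ^ (finrank K V - k) * f ^ k)) := by
            rw [← pow_add, Nat.sub_add_cancel hk, pow_finrank_eq_zero_of_isNilpotent hf, ker_zero,
              finrank_top]
        _ ≤ finrank K (ker (f ^ (finrank K V - k))) + finrank K (ker (f ^ k)) :=
            finrank_ker_comp_le _ _
        _ ≤ (finrank K V - k) + finrank K (ker (f ^ k)) := by
            gcongr; simpa [hker] using finrank_ker_pow_le_mul f (finrank K V - k)
        _ = _ := add_comm _ _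
    rw [hker] at hle
    omega
  · rw [pow_eq_zero_of_le hk (pow_finrank_eq_zero_of_isNilpotent hf), ker_zero, finrank_top,
      min_eq_right hk]

end KerPow

section CyclicBasis

variable {K V : Type*} [Field K] [AddCommGroup V] [Module K V]

theorem linearIndependent_pow_apply {f : End K V} {v : V} {m : ℕ}
    (hv : (f ^ (m + 1)) v = 0) (hv' : (f ^ m) v ≠ 0) :
    LinearIndependent K (fun i : Fin (m + 1) => (f ^ (i : ℕ)) v) := by
  induction m generalizing v with
  | zero => simpa using hv'
  | succ m ih =>
    rw [linearIndependent_finSucc]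
    have htail : Fin.tail (fun i : Fin (m + 2) => (f ^ (i : ℕ)) v) =
        fun i : Fin (m + 1) => (f ^ (i : ℕ)) (f v) := by
      ext i; simp [Fin.tail, pow_succ]
    refine ⟨htail ▸ ih (by rwa [← Module.End.mul_apply, ← pow_succ])
      (by rwa [← Module.End.mul_apply, ← pow_succ]), ?_⟩
    -- `f ^ (m + 1)` kills the span of `f v, …, f ^ (m + 1) v` but not `v`.
    intro hmem
    have hkill : Submodule.span K (Set.range (Fin.tail fun i : Fin (m + 2) => (f ^ (i : ℕ)) v)) ≤
        ker (f ^ (m + 1)) := by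
      rw [Submodule.span_le, htail]
      rintro _ ⟨i, rfl⟩
      have hpow : f ^ (m + 1) * f ^ (i : ℕ) * f = f ^ (i : ℕ) * f ^ (m + 1 + 1) := by
        rw [← pow_add, ← pow_succ, ← pow_add]; ring_nf
      rw [SetLike.mem_coe, mem_ker, ← Module.End.mul_apply, ← Module.End.mul_apply, hpow,
        Module.End.mul_apply, hv, map_zero]
    exact hv' (by simpa using hkill hmem)

variable [FiniteDimensional K V]

theorem exists_basis_pow_apply {f : End K V} (hf : IsNilpotent f) (hker : finrank K (ker f) = 1)
    {m : ℕ} (hm : finrank K V = m + 1) :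
    ∃ (v : V) (b : Basis (Fin (m + 1)) K V), ∀ i, b i = (f ^ (i : ℕ)) v := by
  have hfm : f ^ m ≠ 0 := by
    intro h
    have := finrank_ker_pow_of_finrank_ker_eq_one hf hker m
    rw [h, ker_zero, finrank_top, hm] at this
    omega
  obtain ⟨v, hv⟩ : ∃ v, (f ^ m) v ≠ 0 := by
    by_contra! h
    exact hfm (LinearMap.ext h)
  have hv0 : (f ^ (m + 1)) v = 0 := by
    rw [← hm, pow_finrank_eq_zero_of_isNilpotent hf, LinearMap.zero_apply]
  exact ⟨v, basisOfLinearIndependentOfCardEqFinrank (linearIndependent_pow_apply hv0 hv)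
    (by rw [Fintype.card_fin, hm]), fun i => by rw [coe_basisOfLinearIndependentOfCardEqFinrank]⟩

end CyclicBasis

section TensorSum

variable {K V W : Type*} [Field K] [AddCommGroup V] [Module K V] [AddCommGroup W] [Module K W]

theorem lid_rTensor_lTensor_apply (φ : V →ₗ[K] K) (h : End K W) (x : V ⊗[K] W) :
    TensorProduct.lid K W (φ.rTensor W (h.lTensor V x)) =
      h (TensorProduct.lid K W (φ.rTensor W x)) := by
  induction x using TensorProduct.induction_on with
  | zero => simp
  | tmul y w => simp
  | add x y hx hy => simp only [map_add, hx, hy]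

theorem pow_rTensor_apply_eq_of_mem_ker {f : End K V} {g : End K W} {x : V ⊗[K] W}
    (hx : x ∈ ker (map f id + map id g)) (k : ℕ) :
    (f ^ k).rTensor W x = ((-g) ^ k).lTensor V x := by
  have hcomm : Commute (f.rTensor W) ((-g).lTensor V) := by
    rw [Commute, SemiconjBy, Module.End.mul_eq_comp, Module.End.mul_eq_comp, rTensor_comp_lTensor,
      lTensor_comp_rTensor]
  have hsub : f.rTensor W - (-g).lTensor V = map f id + map id g := by
    rw [lTensor_neg, sub_neg_eq_add, rTensor_def, lTensor_def]
  rw [← rTensor_pow, ← lTensor_pow, ← sub_eq_zero, ← LinearMap.sub_apply, ← hcomm.geom_sum₂_mul,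
    hsub, Module.End.mul_apply, mem_ker.mp hx, map_zero]

theorem lid_rTensor_comp_pow_apply_of_mem_ker {f : End K V} {g : End K W} {x : V ⊗[K] W}
    (hx : x ∈ ker (map f id + map id g)) (φ : V →ₗ[K] K) (k : ℕ) :
    TensorProduct.lid K W ((φ ∘ₗ f ^ k).rTensor W x) =
      ((-g) ^ k) (TensorProduct.lid K W (φ.rTensor W x)) := by
  rw [rTensor_comp, comp_apply, pow_rTensor_apply_eq_of_mem_ker hx, lid_rTensor_lTensor_apply]

theorem sum_pow_tmul_neg_pow_mem_ker {f : End K V} {g : End K W} {m : ℕ} {v : V}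
    (hv : (f ^ (m + 1)) v = 0) {u : W} (hu : u ∈ ker ((-g) ^ (m + 1))) :
    ∑ i ∈ Finset.range (m + 1), (f ^ i) v ⊗ₜ[K] ((-g) ^ (m - i)) u ∈
      ker (map f id + map id g) := by
  set a : ℕ → V ⊗[K] W := fun i => (f ^ i) v ⊗ₜ ((-g) ^ (m + 1 - i)) u
  have hterm : ∀ i ∈ Finset.range (m + 1),
      (map f id + map id g : End K (V ⊗[K] W)) ((f ^ i) v ⊗ₜ ((-g) ^ (m - i)) u) =
        a (i + 1) - a i := by
    intro i hi
    have hi : m + 1 - i = m - i + 1 := by rw [Finset.mem_range] at hi; omega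
    simp only [a, LinearMap.add_apply, map_tmul, id_apply, hi, Nat.add_sub_add_right, pow_succ',
      Module.End.mul_apply, LinearMap.neg_apply, tmul_neg, sub_neg_eq_add]
  rw [mem_ker, map_sum, Finset.sum_congr rfl hterm, Finset.sum_range_sub]
  simp only [a, hv, zero_tmul, Nat.sub_zero, pow_zero, Module.End.one_apply, mem_ker.mp hu,
    tmul_zero, sub_zero]

theorem Module.Basis.coord_eq_coord_last_comp_pow {f : End K V} {m : ℕ} (hf : f ^ (m + 1) = 0)
    {v : V} (b : Basis (Fin (m + 1)) K V) (hb : ∀ i, b i = (f ^ (i : ℕ)) v) (j : Fin (m + 1)) :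
    b.coord j = b.coord (Fin.last m) ∘ₗ f ^ (m - j) := by
  refine b.ext fun i => ?_
  rw [comp_apply, hb i, ← Module.End.mul_apply, ← pow_add, Basis.coord_apply, Basis.coord_apply,
    ← hb i, Basis.repr_self, Finsupp.single_apply]
  rcases le_or_gt (i : ℕ) j with hij | hij
  · rw [← hb ⟨m - j + i, by omega⟩, Basis.repr_self, Finsupp.single_apply]
    simp only [Fin.ext_iff, Fin.val_last]
    congr 1
    apply propext; omega
  · rw [pow_eq_zero_of_le (by omega) hf, LinearMap.zero_apply, map_zero, Finsupp.zero_apply,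
      if_neg (by rw [Fin.ext_iff]; omega)]

theorem equivFinsuppOfBasisLeft_apply_of_mem_ker {f : End K V} {g : End K W} {m : ℕ}
    (hf : f ^ (m + 1) = 0) {v : V} (b : Basis (Fin (m + 1)) K V)
    (hb : ∀ i, b i = (f ^ (i : ℕ)) v) {x : V ⊗[K] W} (hx : x ∈ ker (map f id + map id g))
    (j : Fin (m + 1)) :
    equivFinsuppOfBasisLeft b x j =
      ((-g) ^ (m - j)) (TensorProduct.lid K W ((b.coord (Fin.last m)).rTensor W x)) := by
  rw [equivFinsuppOfBasisLeft_apply, b.coord_eq_coord_last_comp_pow hf hb,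
    lid_rTensor_comp_pow_apply_of_mem_ker hx]

theorem finrank_ker_map_add_map_eq_finrank_ker_neg_pow {f : End K V} (g : End K W) {m : ℕ}
    (hf : f ^ (m + 1) = 0) {v : V} (b : Basis (Fin (m + 1)) K V)
    (hb : ∀ i, b i = (f ^ (i : ℕ)) v) :
    finrank K (ker (map f id + map id g)) = finrank K (ker ((-g) ^ (m + 1))) := by
  classical
  set top : V ⊗[K] W →ₗ[K] W :=
    (TensorProduct.lid K W).toLinearMap ∘ₗ (b.coord (Fin.last m)).rTensor W with htop
  have hcoord : ∀ x ∈ ker (map f id + map id g), ∀ j,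
      equivFinsuppOfBasisLeft b x j = ((-g) ^ (m - j)) (top x) := fun _ hx =>
    equivFinsuppOfBasisLeft_apply_of_mem_ker hf b hb hx
  have hmaps : ∀ x ∈ ker (map f id + map id g), top x ∈ ker ((-g) ^ (m + 1)) := fun x hx => by
    rw [mem_ker, htop, comp_apply, LinearEquiv.coe_coe,
      ← lid_rTensor_comp_pow_apply_of_mem_ker hx, hf, comp_zero, rTensor_zero,
      LinearMap.zero_apply, map_zero]
  let e := (top.domRestrict _).codRestrict _ fun x : ker (map f id + map id g) => hmaps x x.2
  have he : Function.Bijective e := by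
    refine ⟨(injective_iff_map_eq_zero e).mpr fun x hx => ?_, fun u => ?_⟩
    · have htop0 : top x = 0 := congrArg Subtype.val hx
      refine Subtype.ext ((equivFinsuppOfBasisLeft b).injective ?_)
      ext j
      rw [hcoord x x.2, htop0, map_zero, ZeroMemClass.coe_zero, map_zero, Finsupp.zero_apply]
    · set c : Fin (m + 1) → W := fun j => ((-g) ^ (m - j)) u
      have hsum : (equivFinsuppOfBasisLeft b).symm (Finsupp.equivFunOnFinite.symm c) =
          ∑ i ∈ Finset.range (m + 1), (f ^ i) v ⊗ₜ[K] ((-g) ^ (m - i)) u := by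
        rw [equivFinsuppOfBasisLeft_symm_apply, Finsupp.sum_fintype _ _ (by simp),
          ← Fin.sum_univ_eq_sum_range (fun i => (f ^ i) v ⊗ₜ[K] ((-g) ^ (m - i)) u)]
        simp [c, hb]
      have hker := sum_pow_tmul_neg_pow_mem_ker (v := v) (by rw [hf, LinearMap.zero_apply]) u.2
      refine ⟨⟨_, hker⟩, Subtype.ext ?_⟩
      have hlast := hcoord _ hker (Fin.last m)
      nth_rw 1 [← hsum] at hlast
      rw [LinearEquiv.apply_symm_apply, Finsupp.coe_equivFunOnFinite_symm, Fin.val_last,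
        Nat.sub_self, pow_zero, Module.End.one_apply] at hlast
      exact hlast.symm.trans (by simp [c])
  exact (LinearEquiv.ofBijective e he).finrank_eq

end TensorSum

/-- The tensor sum 𝔩 = 𝔪 ⊗ 1 + 1 ⊗ 𝔫 of regular nilpotent endomorphisms of ℂ^m and ℂ^n
has rank mn − min(m,n). -/
theorem rank_tensor_sum_regular_nilpotent (m n : ℕ) (hm : 0 < m) (hn : 0 < n)
    (f : Module.End ℂ (Fin m → ℂ)) (g : Module.End ℂ (Fin n → ℂ))
    (hfnil : IsNilpotent f) (hgnil : IsNilpotent g)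
    (hf : Module.finrank ℂ (LinearMap.range f) = m - 1)
    (hg : Module.finrank ℂ (LinearMap.range g) = n - 1) :
    Module.finrank ℂ (LinearMap.range
      (TensorProduct.map f LinearMap.id + TensorProduct.map LinearMap.id g)) =
      m * n - min m n := by
  have hkerf := finrank_ker_eq_one_of_finrank_range (f := f) (by simpa using hm) (by simpa using hf)
  have hkerg := finrank_ker_eq_one_of_finrank_range (f := g) (by simpa using hn) (by simpa using hg)
  obtain ⟨k, rfl⟩ := Nat.exists_eq_add_one_of_ne_zero hm.ne'
  obtain ⟨v, b, hb⟩ := exists_basis_pow_apply hfnil hkerf (finrank_fin_fun ℂ)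
  have hfk : f ^ (k + 1) = 0 := by
    simpa using pow_finrank_eq_zero_of_isNilpotent hfnil
  have hker : finrank ℂ (ker (map f id + map id g)) = min (k + 1) n := by
    rw [finrank_ker_map_add_map_eq_finrank_ker_neg_pow g hfk b hb,
      finrank_ker_pow_of_finrank_ker_eq_one hgnil.neg (by rwa [ker_neg]), finrank_fin_fun]
  have hrank := finrank_range_add_finrank_ker (map f id + map id g)
  rw [finrank_tensorProduct, finrank_fin_fun, finrank_fin_fun, hker] at hrank
  omega
end

section
/- Let A = ℤ[ℝ] be the integral group ring of the additive group of real numbers, with elements written as finite formal ℤ-linear combinations of symbols [α], α ∈ ℝ. Let d : A → ℤ be the additive map with d([α]) = 1 and v : A → ℝ the additive map with v([α]) = α. Let ∨ : A × A → A be the unique bi-additive map with [α] ∨ [β] = [max(α, β)]. Let A⁺ be the set of elements Σ c_α [α] with c_α ≥ 0 for all α and c_α = 0 for α < 0. Then for all σ, τ ∈ A⁺: v(σ ∨ τ) ≤ d(τ)·v(σ) + d(σ)·v(τ) − min(v(σ), v(τ)). -/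
lemma min_superadd {a s t : ℝ} (ha : 0 ≤ a) (hs : 0 ≤ s) (ht : 0 ≤ t) :
    min (a + s) t ≤ min a t + min s t := by
  rcases le_total a t with h1 | h1 <;> rcases le_total s t with h2 | h2 <;>
    simp [min_def, h1, h2] <;> split <;> linarith

lemma minsum (t : ℝ) (ht : 0 ≤ t) : ∀ (s : Multiset ℝ), (∀ a ∈ s, 0 ≤ a) →
    min s.sum t ≤ (s.map (fun a => min a t)).sum := by
  intro s
  induction s using Multiset.induction with
  | empty => simp
  | cons a s ih =>
    intro h
    have ha : 0 ≤ a := h a (Multiset.mem_cons_self _ _)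
    have hs' : ∀ x ∈ s, 0 ≤ x := fun x hx => h x (Multiset.mem_cons_of_mem hx)
    have hsum : 0 ≤ s.sum := Multiset.sum_nonneg hs'
    simp only [Multiset.map_cons, Multiset.sum_cons]
    calc min (a + s.sum) t ≤ min a t + min s.sum t := min_superadd ha hsum ht
      _ ≤ min a t + (s.map (fun a => min a t)).sum := by linarith [ih hs']

lemma pairmin (σ τ : Multiset ℝ) (hσ : ∀ a ∈ σ, 0 ≤ a) (hτ : ∀ b ∈ τ, 0 ≤ b) :
    min σ.sum τ.sum ≤ ((σ ×ˢ τ).map (fun p => min p.1 p.2)).sum := by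
  have hT : 0 ≤ τ.sum := Multiset.sum_nonneg hτ
  induction σ using Multiset.induction with
  | empty => simp [Multiset.sum_nonneg hτ]
  | cons a σ ih =>
    have ha : 0 ≤ a := hσ a (Multiset.mem_cons_self _ _)
    have hσ' : ∀ x ∈ σ, 0 ≤ x := fun x hx => hσ x (Multiset.mem_cons_of_mem hx)
    have hsum : 0 ≤ σ.sum := Multiset.sum_nonneg hσ'
    rw [Multiset.cons_product, Multiset.map_add, Multiset.sum_add, Multiset.sum_cons,
      Multiset.map_map]
    have h1 : min a τ.sum ≤ (τ.map (fun b => min a b)).sum := by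
      have := minsum a ha τ hτ
      rw [min_comm] at this
      refine this.trans (le_of_eq ?_)
      congr 1; ext b; simp [min_comm]
    have h2 := ih hσ'
    calc min (a + σ.sum) τ.sum ≤ min a τ.sum + min σ.sum τ.sum :=
          min_superadd ha hsum hT
      _ ≤ _ := by
          refine add_le_add (h1.trans (le_of_eq ?_)) h2
          simp [Function.comp]

lemma addconst (a : ℝ) (τ : Multiset ℝ) :
    (τ.map (fun b => a + b)).sum = (τ.card : ℝ) * a + τ.sum := by
  induction τ using Multiset.induction with
  | empty => simp
  | cons b τ ihb => simp [ihb]; ring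

lemma pairadd (σ τ : Multiset ℝ) :
    ((σ ×ˢ τ).map (fun p => p.1 + p.2)).sum =
      (τ.card : ℝ) * σ.sum + (σ.card : ℝ) * τ.sum := by
  induction σ using Multiset.induction with
  | empty => simp
  | cons a σ ih =>
    rw [Multiset.cons_product, Multiset.map_add, Multiset.sum_add, Multiset.map_map,
      Multiset.sum_cons, Multiset.card_cons, ih]
    rw [show ((fun p : ℝ × ℝ => p.1 + p.2) ∘ Prod.mk a) = (fun b => a + b) from rfl,
      addconst a τ]
    push_cast
    ring

/-- Combinatorial inequality of 5.1 Proposition: modeling elements of A⁺ as finite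
multisets of nonnegative reals, with d = cardinality, v = sum, and
σ ∨ τ = the multiset of max(a,b) over all pairs, one has
v(σ ∨ τ) ≤ d(τ)·v(σ) + d(σ)·v(τ) − min(v(σ), v(τ)). -/
theorem v_vee_le (σ τ : Multiset ℝ)
    (hσ : ∀ a ∈ σ, 0 ≤ a) (hτ : ∀ b ∈ τ, 0 ≤ b) :
    ((σ ×ˢ τ).map (fun p => max p.1 p.2)).sum ≤
      (τ.card : ℝ) * σ.sum + (σ.card : ℝ) * τ.sum - min σ.sum τ.sum := by
  have key : ((σ ×ˢ τ).map (fun p => max p.1 p.2)).sum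
      = ((σ ×ˢ τ).map (fun p => p.1 + p.2)).sum
        - ((σ ×ˢ τ).map (fun p => min p.1 p.2)).sum := by
    rw [eq_sub_iff_add_eq, ← Multiset.sum_map_add]
    congr 1; ext p; simp [max_add_min]
  rw [key, pairadd]
  have := pairmin σ τ hσ hτ
  linarith
end

section
/- Let X be a type with a symmetric function η : X × X → ℝ satisfying η(σ, τ) ≥ (1/2)(η(σ, σ) + η(τ, τ)) for all σ, τ ∈ X (the base case on 'indecomposables'). Extend η bilinearly to formal nonnegative convex combinations: for finitely supported probability weights (α_i) on points (x_i) and (β_j) on points (y_j), define η(Σα_i x_i, Σβ_j y_j) = Σ_{i,j} α_i β_j η(x_i, y_j). Suppose moreover the ultrametric property η(x, y) ≤ max(η(x, z), η(z, y)) and minimality η(x, x) ≤ η(x, y) hold on X. Then for any two formal convex combinations σ, τ: η(σ, τ) ≥ (1/2)(η(σ, σ) + η(τ, τ)). -/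
open Finset

/-- The indicator matrix of a symmetric transitive relation is PSD. -/
lemma per_psd {n : ℕ} (R : Fin n → Fin n → Prop) [DecidableRel R]
    (hs : ∀ u v, R u v → R v u) (ht : ∀ u v z, R u z → R z v → R u v)
    (w : Fin n → ℝ) :
    0 ≤ ∑ u, ∑ v, w u * w v * (if R u v then (1:ℝ) else 0) := by
  classical
  set rep : Fin n → Prop := fun z => R z z ∧ ∀ u, u < z → ¬ R u z with hrep
  set f : Fin n → Fin n → ℝ := fun z u => if rep z ∧ R u z then (1:ℝ) else 0 with hf
  have key : ∀ u v, (if R u v then (1:ℝ) else 0) = ∑ z, f z u * f z v := by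
    intro u v
    by_cases h : R u v
    · -- the class of u has a unique representative
      have huu : R u u := ht u u v h (hs u v h)
      set S : Finset (Fin n) := univ.filter (fun z => R u z) with hS
      have hSne : S.Nonempty := ⟨u, by simp [hS, huu]⟩
      set z₀ := S.min' hSne with hz₀
      have hz₀S : z₀ ∈ S := S.min'_mem hSne
      have hRuz₀ : R u z₀ := by simpa [hS] using hz₀S
      have hrepz₀ : rep z₀ := by
        constructor
        · exact ht z₀ z₀ u (hs u z₀ hRuz₀) hRuz₀
        · intro u' hu' hRu'
          have : R u u' := ht u u' z₀ hRuz₀ (hs u' z₀ hRu')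
          have : u' ∈ S := by simp [hS, this]
          exact absurd (S.min'_le u' this) (not_le.mpr hu')
      have huniq : ∀ z, rep z → R u z → z = z₀ := by
        intro z hz hRz
        have h1 : R z z₀ := ht z z₀ u (hs u z hRz) hRuz₀
        rcases lt_trichotomy z z₀ with hlt | heq | hgt
        · exact absurd h1 (hrepz₀.2 z hlt)
        · exact heq
        · exact absurd (hs z z₀ h1) (hz.2 z₀ hgt)
      rw [if_pos h]
      rw [Finset.sum_eq_single z₀]
      · have hRvz₀ : R v z₀ := ht v z₀ u (hs u v h) hRuz₀
        have e1 : f z₀ u = 1 := if_pos ⟨hrepz₀, hRuz₀⟩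
        have e2 : f z₀ v = 1 := if_pos ⟨hrepz₀, hRvz₀⟩
        rw [e1, e2]; norm_num
      · intro z _ hz
        by_cases hc : rep z ∧ R u z
        · exact absurd (huniq z hc.1 hc.2) hz
        · simp [hf, hc]
      · intro hz; exact absurd (mem_univ z₀) hz
    · rw [if_neg h]
      symm
      apply Finset.sum_eq_zero
      intro z _
      by_cases hc : rep z ∧ R u z
      · by_cases hc' : rep z ∧ R v z
        · exact absurd (ht u v z hc.2 (hs v z hc'.2)) h
        · simp [hf, hc']
      · simp [hf, hc]
  have h1 : ∀ u v, w u * w v * (if R u v then (1:ℝ) else 0)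
      = ∑ z, (w u * f z u) * (w v * f z v) := by
    intro u v
    rw [key u v, Finset.mul_sum]
    apply Finset.sum_congr rfl
    intro z _; ring
  calc ∑ u, ∑ v, w u * w v * (if R u v then (1:ℝ) else 0)
      = ∑ u, ∑ v, ∑ z, (w u * f z u) * (w v * f z v) := by
        apply Finset.sum_congr rfl; intro u _
        apply Finset.sum_congr rfl; intro v _
        exact h1 u v
    _ = ∑ u, ∑ z, ∑ v, (w u * f z u) * (w v * f z v) := by
        apply Finset.sum_congr rfl; intro u _
        exact Finset.sum_comm
    _ = ∑ z, ∑ u, ∑ v, (w u * f z u) * (w v * f z v) := Finset.sum_comm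
    _ = ∑ z, (∑ u, w u * f z u) * (∑ v, w v * f z v) := by
        apply Finset.sum_congr rfl; intro z _
        rw [Finset.sum_mul_sum]
    _ ≥ 0 := by
        apply Finset.sum_nonneg
        intro z _
        exact mul_self_nonneg _

/-- A symmetric nonnegative "min-ultrametric similarity" matrix is PSD. -/
lemma minultra_psd_aux {n : ℕ} (N : ℕ) : ∀ (g : Fin n → Fin n → ℝ),
    (∀ u v, g u v = g v u) → (∀ u v, 0 ≤ g u v) →
    (∀ u v z, min (g u z) (g z v) ≤ g u v) → (∀ u v, g u v ≤ g u u) →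
    (((univ : Finset (Fin n × Fin n)).image (fun q => g q.1 q.2)).filter
      (fun t => 0 < t)).card ≤ N →
    ∀ w : Fin n → ℝ, 0 ≤ ∑ u, ∑ v, w u * w v * g u v := by
  classical
  induction N with
  | zero =>
    intro g hsym hnn hmin hdiag hcard w
    have hall : ∀ u v : Fin n, g u v = 0 := by
      intro u v
      by_contra hne
      have hpos : 0 < g u v := lt_of_le_of_ne (hnn u v) (Ne.symm hne)
      have hmem : g u v ∈ (((univ : Finset (Fin n × Fin n)).image (fun q => g q.1 q.2)).filter
          (fun t => 0 < t)) := by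
        simp only [mem_filter, mem_image]
        exact ⟨⟨(u, v), mem_univ _, rfl⟩, hpos⟩
      have := card_pos.mpr ⟨_, hmem⟩
      omega
    have hz : ∑ u, ∑ v, w u * w v * g u v = 0 := by
      apply Finset.sum_eq_zero; intro u _
      apply Finset.sum_eq_zero; intro v _
      rw [hall u v]; ring
    rw [hz]
  | succ N ih =>
    intro g hsym hnn hmin hdiag hcard w
    set V := (((univ : Finset (Fin n × Fin n)).image (fun q => g q.1 q.2)).filter
      (fun t => 0 < t)) with hV
    by_cases hVe : V = ∅
    · have hall : ∀ u v : Fin n, g u v = 0 := by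
        intro u v
        by_contra hne
        have hpos : 0 < g u v := lt_of_le_of_ne (hnn u v) (Ne.symm hne)
        have hmem : g u v ∈ V := by
          simp only [hV, mem_filter, mem_image]
          exact ⟨⟨(u, v), mem_univ _, rfl⟩, hpos⟩
        rw [hVe] at hmem
        exact absurd hmem (notMem_empty _)
      have hz : ∑ u, ∑ v, w u * w v * g u v = 0 := by
        apply Finset.sum_eq_zero; intro u _
        apply Finset.sum_eq_zero; intro v _
        rw [hall u v]; ring
      rw [hz]
    · have hVne : V.Nonempty := nonempty_iff_ne_empty.mpr hVe
      set m := V.min' hVne with hm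
      have hmV : m ∈ V := V.min'_mem hVne
      have hmpos : 0 < m := (mem_filter.mp hmV).2
      have hmle : ∀ u v, 0 < g u v → m ≤ g u v := by
        intro u v hpos
        apply V.min'_le
        simp only [hV, mem_filter, mem_image]
        exact ⟨⟨(u, v), mem_univ _, rfl⟩, hpos⟩
      have hzero : ∀ u v, g u v < m → g u v = 0 := by
        intro u v hlt
        by_contra hne
        have hpos : 0 < g u v := lt_of_le_of_ne (hnn u v) (Ne.symm hne)
        exact absurd (hmle u v hpos) (not_le.mpr hlt)
      -- the truncated similarity
      set g' : Fin n → Fin n → ℝ := fun u v => max (g u v - m) 0 with hg'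
      have hg'sym : ∀ u v, g' u v = g' v u := by intro u v; simp only [hg']; rw [hsym u v]
      have hg'nn : ∀ u v, 0 ≤ g' u v := by intro u v; simp [hg']
      have hg'min : ∀ u v z, min (g' u z) (g' z v) ≤ g' u v := by
        intro u v z
        have key : min (g u z) (g z v) ≤ g u v := hmin u v z
        have step1 : min (g' u z) (g' z v) ≤ max (min (g u z) (g z v) - m) 0 := by
          rcases le_total (g u z) (g z v) with h | h
          · rw [min_eq_left h]; exact min_le_left _ _
          · rw [min_eq_right h]; exact min_le_right _ _
        exact step1.trans (max_le_max (by linarith) le_rfl)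
      have hg'diag : ∀ u v, g' u v ≤ g' u u :=
        fun u v => max_le_max (by linarith [hdiag u v]) le_rfl
      -- cardinality decreases
      have hcard' : (((univ : Finset (Fin n × Fin n)).image (fun q => g' q.1 q.2)).filter
          (fun t => 0 < t)).card ≤ N := by
        have hsub : (((univ : Finset (Fin n × Fin n)).image (fun q => g' q.1 q.2)).filter
            (fun t => 0 < t)) ⊆ (V.erase m).image (fun t => t - m) := by
          intro t ht
          simp only [mem_filter, mem_image] at ht
          obtain ⟨⟨q, _, hq⟩, htpos⟩ := ht
          have hgt : m < g q.1 q.2 := by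
            by_contra hle
            push_neg at hle
            have : g' q.1 q.2 = 0 := by
              simp only [hg']; rw [max_eq_right]; linarith
            rw [hq] at this; linarith
          have hq' : t = g q.1 q.2 - m := by
            rw [← hq]; simp only [hg']; rw [max_eq_left]; linarith
          simp only [mem_image, mem_erase]
          refine ⟨g q.1 q.2, ⟨ne_of_gt hgt, ?_⟩, by linarith⟩
          simp only [hV, mem_filter, mem_image]
          exact ⟨⟨q, mem_univ _, rfl⟩, by linarith⟩
        calc _ ≤ ((V.erase m).image (fun t => t - m)).card := card_le_card hsub
          _ ≤ (V.erase m).card := card_image_le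
          _ = V.card - 1 := card_erase_of_mem hmV
          _ ≤ N := by omega
      -- decomposition
      have hdec : ∀ u v, w u * w v * g u v =
          w u * w v * g' u v + m * (w u * w v * (if m ≤ g u v then (1:ℝ) else 0)) := by
        intro u v
        by_cases h : m ≤ g u v
        · rw [if_pos h]
          have : g' u v = g u v - m := by simp only [hg']; rw [max_eq_left]; linarith
          rw [this]; ring
        · rw [if_neg h]
          push_neg at h
          have h0 : g u v = 0 := hzero u v h
          have : g' u v = 0 := by simp only [hg']; rw [max_eq_right]; linarith
          rw [this, h0]; ring
      have hsplit : ∑ u, ∑ v, w u * w v * g u v =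
          (∑ u, ∑ v, w u * w v * g' u v) +
            m * ∑ u, ∑ v, w u * w v * (if m ≤ g u v then (1:ℝ) else 0) := by
        simp_rw [hdec, Finset.sum_add_distrib, Finset.mul_sum]
      rw [hsplit]
      have h1 : 0 ≤ ∑ u, ∑ v, w u * w v * g' u v :=
        ih g' hg'sym hg'nn hg'min hg'diag hcard' w
      have h2 : 0 ≤ ∑ u, ∑ v, w u * w v * (if m ≤ g u v then (1:ℝ) else 0) := by
        apply per_psd (fun u v => m ≤ g u v)
        · intro u v h; rw [hsym]; exact h
        · intro u v z h1' h2'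
          have := hmin u v z
          have : m ≤ min (g u z) (g z v) := le_min h1' h2'
          linarith [hmin u v z]
      nlinarith [mul_nonneg hmpos.le h2]

lemma minultra_psd {n : ℕ} (g : Fin n → Fin n → ℝ)
    (h1 : ∀ u v, g u v = g v u) (h2 : ∀ u v, 0 ≤ g u v)
    (h3 : ∀ u v z, min (g u z) (g z v) ≤ g u v) (h4 : ∀ u v, g u v ≤ g u u)
    (w : Fin n → ℝ) : 0 ≤ ∑ u, ∑ v, w u * w v * g u v :=
  minultra_psd_aux _ g h1 h2 h3 h4 le_rfl w

/-- Abstract Theorem B: if η on X is symmetric, satisfies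
η(x,y) ≥ (1/2)(η(x,x)+η(y,y)), the ultrametric inequality and minimality
η(x,x) ≤ η(x,y), then the bilinear extension to formal convex combinations
satisfies the same inequality η(σ,τ) ≥ (1/2)(η(σ,σ)+η(τ,τ)). -/
theorem theoremB_abstract {X : Type*} (η : X → X → ℝ)
    (hsym : ∀ x y, η x y = η y x)
    (hbase : ∀ x y, η x y ≥ (1/2) * (η x x + η y y))
    (hultra : ∀ x y z, η x y ≤ max (η x z) (η z y))
    (hmin : ∀ x y, η x x ≤ η x y)
    {I J : Type*} [Fintype I] [Fintype J] [Nonempty I] [Nonempty J]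
    (α : I → ℝ) (β : J → ℝ) (hα : ∀ i, 0 ≤ α i) (hβ : ∀ j, 0 ≤ β j)
    (hαsum : ∑ i, α i = 1) (hβsum : ∑ j, β j = 1)
    (x : I → X) (y : J → X) :
    ∑ i, ∑ j, α i * β j * η (x i) (y j) ≥
      (1/2) * ((∑ i, ∑ i', α i * α i' * η (x i) (x i')) +
        (∑ j, ∑ j', β j * β j' * η (y j) (y j'))) := by
  classical
  set W : I ⊕ J → ℝ := Sum.elim α (fun j => -β j) with hW
  set P : I ⊕ J → X := Sum.elim x y with hP
  set n := Fintype.card (I ⊕ J) with hn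
  set e : I ⊕ J ≃ Fin n := Fintype.equivFin (I ⊕ J) with he
  set p : Fin n → X := fun u => P (e.symm u) with hp
  set w : Fin n → ℝ := fun u => W (e.symm u) with hw
  have hnpos : 0 < n := Fintype.card_pos
  haveI : Nonempty (Fin n) := ⟨⟨0, hnpos⟩⟩
  -- the constant C
  set Vs : Finset ℝ := (univ : Finset (Fin n × Fin n)).image (fun q => η (p q.1) (p q.2))
    with hVs
  have hVsne : Vs.Nonempty := by
    refine ⟨η (p (Classical.arbitrary _)) (p (Classical.arbitrary _)), ?_⟩
    simp only [hVs, mem_image]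
    exact ⟨(Classical.arbitrary _, Classical.arbitrary _), mem_univ _, rfl⟩
  set C := Vs.max' hVsne with hC
  have hCle : ∀ u v : Fin n, η (p u) (p v) ≤ C := by
    intro u v
    apply Vs.le_max'
    simp only [hVs, mem_image]
    exact ⟨(u, v), mem_univ _, rfl⟩
  set g : Fin n → Fin n → ℝ := fun u v => C - η (p u) (p v) with hg
  have hgsym : ∀ u v, g u v = g v u := by
    intro u v; simp only [hg]; rw [hsym]
  have hgnn : ∀ u v, 0 ≤ g u v := by
    intro u v; simp only [hg]; linarith [hCle u v]
  have hgmin : ∀ u v z, min (g u z) (g z v) ≤ g u v := by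
    intro u v z
    have h := hultra (p u) (p v) (p z)
    simp only [hg]
    rcases le_total (η (p u) (p z)) (η (p z) (p v)) with h' | h'
    · have : η (p u) (p v) ≤ η (p z) (p v) := by
        rw [max_eq_right h'] at h; exact h
      exact le_trans (min_le_right _ _) (by linarith)
    · have : η (p u) (p v) ≤ η (p u) (p z) := by
        rw [max_eq_left h'] at h; exact h
      exact le_trans (min_le_left _ _) (by linarith)
  have hgdiag : ∀ u v, g u v ≤ g u u := by
    intro u v; simp only [hg]; linarith [hmin (p u) (p v)]
  have hpsd := minultra_psd g hgsym hgnn hgmin hgdiag w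
  -- total weight is zero
  have hw0 : ∑ u, w u = 0 := by
    have h1 : ∑ u, w u = ∑ z : I ⊕ J, W z := Equiv.sum_comp e.symm W
    rw [h1, hW, Fintype.sum_sum_type]
    simp [hαsum, hβsum]
  -- rewrite the PSD inequality
  have hE : ∑ u, ∑ v, w u * w v * g u v = - ∑ u, ∑ v, w u * w v * η (p u) (p v) := by
    have hCzero : ∑ u, ∑ v, w u * w v * C = 0 := by
      have : ∀ u : Fin n, ∑ v, w u * w v * C = w u * ((∑ v, w v) * C) := by
        intro u
        rw [Finset.sum_mul, Finset.mul_sum]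
        apply Finset.sum_congr rfl
        intro v _; ring
      simp [this, hw0]
    calc ∑ u, ∑ v, w u * w v * g u v
        = (∑ u, ∑ v, w u * w v * C) - ∑ u, ∑ v, w u * w v * η (p u) (p v) := by
          rw [← Finset.sum_sub_distrib]
          apply Finset.sum_congr rfl; intro u _
          rw [← Finset.sum_sub_distrib]
          apply Finset.sum_congr rfl; intro v _
          simp only [hg]; ring
      _ = - ∑ u, ∑ v, w u * w v * η (p u) (p v) := by rw [hCzero]; ring
  rw [hE] at hpsd
  have hS : ∑ u, ∑ v, w u * w v * η (p u) (p v) ≤ 0 := by linarith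
  -- transfer the sum back to I ⊕ J
  have htrans : ∑ u, ∑ v, w u * w v * η (p u) (p v)
      = ∑ a : I ⊕ J, ∑ b : I ⊕ J, W a * W b * η (P a) (P b) := by
    rw [← Equiv.sum_comp e.symm (fun a => ∑ b : I ⊕ J, W a * W b * η (P a) (P b))]
    apply Finset.sum_congr rfl; intro u _
    rw [← Equiv.sum_comp e.symm (fun b => W (e.symm u) * W b * η (P (e.symm u)) (P b))]
  rw [htrans] at hS
  set T := ∑ i, ∑ j, α i * β j * η (x i) (y j) with hT
  rw [Fintype.sum_sum_type] at hS
  have hL : ∀ i : I, ∑ b : I ⊕ J, W (Sum.inl i) * W b * η (P (Sum.inl i)) (P b)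
      = (∑ i', α i * α i' * η (x i) (x i')) - ∑ j, α i * β j * η (x i) (y j) := by
    intro i
    rw [Fintype.sum_sum_type]
    simp only [hW, hP, Sum.elim_inl, Sum.elim_inr]
    rw [sub_eq_add_neg]
    congr 1
    rw [← Finset.sum_neg_distrib]
    apply Finset.sum_congr rfl; intro j _; ring
  have hR : ∀ j : J, ∑ b : I ⊕ J, W (Sum.inr j) * W b * η (P (Sum.inr j)) (P b)
      = (∑ j', β j * β j' * η (y j) (y j')) - ∑ i, α i * β j * η (x i) (y j) := by
    intro j
    rw [Fintype.sum_sum_type]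
    simp only [hW, hP, Sum.elim_inl, Sum.elim_inr]
    rw [sub_eq_add_neg, add_comm (∑ j', β j * β j' * η (y j) (y j')) _]
    congr 1
    · rw [← Finset.sum_neg_distrib]
      apply Finset.sum_congr rfl; intro i _
      rw [hsym (y j) (x i)]; ring
    · apply Finset.sum_congr rfl; intro j' _; ring
  have h1 : ∑ i : I, ∑ b : I ⊕ J, W (Sum.inl i) * W b * η (P (Sum.inl i)) (P b)
      = (∑ i, ∑ i', α i * α i' * η (x i) (x i')) - T := by
    rw [hT, ← Finset.sum_sub_distrib]
    exact Finset.sum_congr rfl (fun i _ => hL i)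
  have h2 : ∑ j : J, ∑ b : I ⊕ J, W (Sum.inr j) * W b * η (P (Sum.inr j)) (P b)
      = (∑ j, ∑ j', β j * β j' * η (y j) (y j')) - T := by
    have hTc : T = ∑ j, ∑ i, α i * β j * η (x i) (y j) := by rw [hT]; exact Finset.sum_comm
    rw [hTc, ← Finset.sum_sub_distrib]
    exact Finset.sum_congr rfl (fun j _ => hR j)
  rw [h1, h2] at hS
  linarith
end
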